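/- arXiv:2012.10558 — 3 statements merged into one kernel-verified Lean document; each statement's English description precedes it below -/
import Mathlib

section
/- Let K_P : ℝ → ℝ be even, 2π-periodic, continuous on 𝕋∖{0}, integrable, and strictly decreasing on (0,π). If f, g ∈ L^∞(𝕋) are odd functions with f(y) ≥ g(y) for all y ∈ [0,π], then either Lf(x) > Lg(x) for all x ∈ (0,π), or f = g almost everywhere on 𝕋, where Lh(x) = ∫_{−π}^{π} K_P(x−y) h(y) dy. -/
/-!
With `D = f - g`, odd and nonnegative on `[0, π]`, oddness folds the convolution onto `[0, π]`:
`Lf x - Lg x = ∫ y in (0, π], (K (x - y) - K (x + y)) * D y`.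
For `x, y ∈ (0, π)`, evenness and `2π`-periodicity bring both kernel values back to `(0, π)`,
at `|x - y|` and at `min (x + y) (2π - x - y)`, and the first point is the smaller one; so,
`K` being strictly decreasing there, the kernel difference is positive for all but finitely
many `y`. The integral is therefore positive unless `D` vanishes a.e. on `(0, π]`, hence,
by oddness, a.e. on `[-π, π]`.
-/

open MeasureTheory Real Set Function

lemma Function.Periodic.intervalIntegrable_of_integrableOn_Icc {K : ℝ → ℝ} {a : ℝ}
    (ha : 0 < a) (hKper : Periodic K (2 * a)) (hK : IntegrableOn K (Icc (-a) a)) (c d : ℝ) :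
    IntervalIntegrable K volume c d :=
  hKper.intervalIntegrable (t := -a) (by positivity) (by
    rwa [show -a + 2 * a = a by ring, intervalIntegrable_iff_integrableOn_Icc_of_le (by linarith)])
  c d

lemma IntervalIntegrable.mul_of_abs_le {k h : ℝ → ℝ} {a b C : ℝ}
    (hk : IntervalIntegrable k volume a b) (hh : AEStronglyMeasurable h volume)
    (hC : ∀ y, |h y| ≤ C) : IntervalIntegrable (fun y => k y * h y) volume a b :=
  intervalIntegrable_iff.2 <|
    hk.def'.mul_bdd hh.restrict (ae_of_all _ fun y => (Real.norm_eq_abs _).trans_le (hC y))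

lemma intervalIntegral.integral_neg_self_eq_integral_add_comp_neg {F : ℝ → ℝ} {a : ℝ}
    (hF : IntervalIntegrable F volume (-a) a) :
    ∫ y in (-a)..a, F y = ∫ y in 0..a, (F y + F (-y)) := by
  have h0 : (0 : ℝ) ∈ uIcc (-a) a := by
    rcases le_total 0 a with h | h <;> simp [h]
  have hleft := hF.mono_set (uIcc_subset_uIcc_left h0)
  have hright := hF.mono_set (uIcc_subset_uIcc_right h0)
  have hneg : IntervalIntegrable (fun y => F (-y)) volume 0 a := by
    simpa using ((IntervalIntegrable.iff_comp_neg (by simp)).1 hleft).symm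
  calc ∫ y in (-a)..a, F y = (∫ y in (-a)..0, F y) + ∫ y in 0..a, F y :=
        (integral_add_adjacent_intervals hleft hright).symm
    _ = (∫ y in 0..a, F (-y)) + ∫ y in 0..a, F y := by rw [integral_comp_neg, neg_zero]
    _ = ∫ y in 0..a, (F y + F (-y)) := by rw [add_comm, integral_add hright hneg]

lemma integral_Icc_kernel_mul_odd {K D : ℝ → ℝ} (hD : D.Odd) {a x : ℝ} (ha : 0 ≤ a)
    (hKD : IntervalIntegrable (fun y => K (x - y) * D y) volume (-a) a) :
    ∫ y in Icc (-a) a, K (x - y) * D y = ∫ y in Ioc 0 a, (K (x - y) - K (x + y)) * D y := by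
  rw [integral_Icc_eq_integral_Ioc, ← intervalIntegral.integral_of_le (by linarith),
    intervalIntegral.integral_neg_self_eq_integral_add_comp_neg hKD,
    intervalIntegral.integral_of_le ha]
  refine setIntegral_congr_fun measurableSet_Ioc fun y _ => ?_
  simp only [sub_neg_eq_add, hD y]
  ring

lemma integral_mul_pos_of_ae_pos {α : Type*} [MeasurableSpace α] {μ : Measure α}
    {w h : α → ℝ} (hw : ∀ᵐ y ∂μ, 0 < w y) (hh : ∀ᵐ y ∂μ, 0 ≤ h y)
    (hint : Integrable (fun y => w y * h y) μ)
    (hsupp : 0 < μ (support h)) : 0 < ∫ y, w y * h y ∂μ := by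
  have hw0 : μ (support w)ᶜ = 0 := ae_iff.1 (hw.mono fun y hy => hy.ne')
  have hnonneg : 0 ≤ᵐ[μ] fun y => w y * h y := by
    filter_upwards [hw, hh] with y hwy hhy using mul_nonneg hwy.le hhy
  rwa [integral_pos_iff_support_of_nonneg_ae hnonneg hint, support_mul, inter_comm,
    measure_inter_conull hw0]

section Kernel

variable {K : ℝ → ℝ} {a : ℝ}

lemma Function.Even.apply_sub_of_periodic (hK : K.Even) (hKper : Periodic K a) (t : ℝ) :
    K (a - t) = K t := by
  rw [← neg_sub, hK, hKper.sub_eq]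

lemma Function.Even.apply_abs (hK : K.Even) (t : ℝ) : K |t| = K t := by
  rcases abs_choice t with h | h <;> rw [h]
  exact hK t

lemma kernel_add_lt_kernel_sub (hK : K.Even) (hKper : Periodic K (2 * a))
    (hKdec : StrictAntiOn K (Ioo 0 a)) {x y : ℝ} (hx : x ∈ Ioo 0 a) (hy : y ∈ Ioo 0 a)
    (hxy : x ≠ y) (hsum : x + y ≠ a) : K (x + y) < K (x - y) := by
  obtain ⟨hx0, hxa⟩ := hx
  obtain ⟨hy0, hya⟩ := hy
  have hdist : |x - y| ∈ Ioo 0 a :=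
    ⟨abs_pos.2 (sub_ne_zero.2 hxy), abs_sub_lt_iff.2 ⟨by linarith, by linarith⟩⟩
  rw [← hK.apply_abs (x - y)]
  rcases hsum.lt_or_gt with hlt | hgt
  · exact hKdec hdist ⟨by linarith, hlt⟩ (abs_sub_lt_iff.2 ⟨by linarith, by linarith⟩)
  · rw [← hK.apply_sub_of_periodic hKper]
    exact hKdec hdist ⟨by linarith, by linarith⟩
      (abs_sub_lt_iff.2 ⟨by linarith, by linarith⟩)

lemma ae_kernel_add_lt_kernel_sub (hK : K.Even) (hKper : Periodic K (2 * a))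
    (hKdec : StrictAntiOn K (Ioo 0 a)) {x : ℝ} (hx : x ∈ Ioo 0 a) :
    ∀ᵐ y ∂volume.restrict (Ioc 0 a), K (x + y) < K (x - y) := by
  have hfin : ({x, a - x, a} : Set ℝ).Finite := toFinite _
  filter_upwards [ae_restrict_mem measurableSet_Ioc,
    ae_restrict_of_ae (hfin.countable.ae_notMem volume)] with y ⟨hy0, hya⟩ hy
  simp only [mem_insert_iff, mem_singleton_iff, not_or] at hy
  exact kernel_add_lt_kernel_sub hK hKper hKdec hx ⟨hy0, lt_of_le_of_ne hya hy.2.2⟩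
    (Ne.symm hy.1) (fun h => hy.2.1 (by linarith))

lemma integral_Ioc_kernel_sub_mul_pos (hK : K.Even) (hKper : Periodic K (2 * a))
    (hKdec : StrictAntiOn K (Ioo 0 a)) {x : ℝ} (hx : x ∈ Ioo 0 a) {D : ℝ → ℝ}
    (hD : ∀ y ∈ Ioc 0 a, 0 ≤ D y)
    (hint : IntegrableOn (fun y => (K (x - y) - K (x + y)) * D y) (Ioc 0 a))
    (hsupp : 0 < volume.restrict (Ioc 0 a) (support D)) :
    0 < ∫ y in Ioc 0 a, (K (x - y) - K (x + y)) * D y := by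
  refine integral_mul_pos_of_ae_pos ?_ ?_ hint hsupp
  · filter_upwards [ae_kernel_add_lt_kernel_sub hK hKper hKdec hx] with y hy
    exact sub_pos.2 hy
  · filter_upwards [ae_restrict_mem measurableSet_Ioc] with y hy using hD y hy

end Kernel

lemma Function.Odd.ae_eq_zero_of_ae_eq_zero_Ioc {D : ℝ → ℝ} (hD : D.Odd) {a : ℝ}
    (h : ∀ᵐ y ∂volume.restrict (Ioc 0 a), D y = 0) :
    ∀ᵐ y ∂volume.restrict (Icc (-a) a), D y = 0 := by
  rw [ae_restrict_iff' measurableSet_Ioc] at h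
  rw [ae_restrict_iff' measurableSet_Icc]
  have hneg := (Measure.measurePreserving_neg volume).quasiMeasurePreserving.ae h
  filter_upwards [h, hneg] with y hy hny ⟨hya, hay⟩
  rcases lt_trichotomy y 0 with hy0 | rfl | hy0
  · simpa [hD y] using hny ⟨by linarith, by linarith⟩
  · exact hD.map_zero
  · exact hy ⟨hy0, hay⟩

theorem conv_strict_monotone_odd_general
    (KP f g : ℝ → ℝ)
    (hKeven : ∀ x, KP (-x) = KP x)
    (hKper : Function.Periodic KP (2 * π))
    (hKint : IntegrableOn KP (Set.Icc (-π) π))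
    (hKdec : StrictAntiOn KP (Set.Ioo 0 π))
    (hfm : Measurable f) (hgm : Measurable g)
    (hfbdd : ∃ C : ℝ, ∀ x, |f x| ≤ C) (hgbdd : ∃ C : ℝ, ∀ x, |g x| ≤ C)
    (hfodd : ∀ y, f (-y) = -f y) (hgodd : ∀ y, g (-y) = -g y)
    (hfg : ∀ y ∈ Set.Icc 0 π, g y ≤ f y) :
    (∀ x ∈ Set.Ioo 0 π,
        (∫ y in Set.Icc (-π) π, KP (x - y) * g y)
          < ∫ y in Set.Icc (-π) π, KP (x - y) * f y) ∨
    (∀ᵐ y ∂(volume.restrict (Set.Icc (-π) π)), f y = g y) := by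
  obtain ⟨Cf, hCf⟩ := hfbdd
  obtain ⟨Cg, hCg⟩ := hgbdd
  set D : ℝ → ℝ := fun y => f y - g y
  have hDodd : D.Odd := fun y => by simp only [D, hfodd, hgodd]; ring
  have hDbdd (y : ℝ) : |D y| ≤ Cf + Cg := (abs_sub _ _).trans (add_le_add (hCf y) (hCg y))
  by_cases hae : ∀ᵐ y ∂(volume.restrict (Icc (-π) π)), f y = g y
  · exact Or.inr hae
  refine Or.inl fun x hx => ?_
  have hsupp : 0 < volume.restrict (Ioc 0 π) (support D) := by
    refine pos_iff_ne_zero.2 fun h0 => hae ?_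
    filter_upwards [hDodd.ae_eq_zero_of_ae_eq_zero_Ioc (ae_iff.2 h0)] with y hy
    exact sub_eq_zero.1 hy
  have hK := hKper.intervalIntegrable_of_integrableOn_Icc pi_pos hKint
  have hKsub (c d : ℝ) : IntervalIntegrable (fun y => KP (x - y)) volume c d := by
    simpa using (hK (x - c) (x - d)).comp_sub_left x
  have hKadd (c d : ℝ) : IntervalIntegrable (fun y => KP (x + y)) volume c d := by
    simpa using (hK (x + c) (x + d)).comp_add_left x
  have hconv {h : ℝ → ℝ} {C : ℝ} (hm : Measurable h) (hC : ∀ y, |h y| ≤ C) :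
      IntegrableOn (fun y => KP (x - y) * h y) (Icc (-π) π) :=
    (intervalIntegrable_iff_integrableOn_Icc_of_le (by linarith [pi_pos])).1
      ((hKsub _ _).mul_of_abs_le hm.aestronglyMeasurable hC)
  have hDm : AEStronglyMeasurable D volume := (hfm.sub hgm).aestronglyMeasurable
  rw [← sub_pos, ← integral_sub (hconv hfm hCf) (hconv hgm hCg)]
  simp_rw [← mul_sub]
  rw [integral_Icc_kernel_mul_odd hDodd pi_pos.le ((hKsub _ _).mul_of_abs_le hDm hDbdd)]
  refine integral_Ioc_kernel_sub_mul_pos hKeven hKper hKdec hx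
    (fun y hy => sub_nonneg.2 (hfg y (Ioc_subset_Icc_self hy))) ?_ hsupp
  exact (intervalIntegrable_iff_integrableOn_Ioc_of_le pi_pos.le).1
    (((hKsub _ _).sub (hKadd _ _)).mul_of_abs_le hDm hDbdd)

/-- Strict monotonicity of the periodic convolution operator on ordered odd functions. -/
theorem conv_strict_monotone_odd
    (KP f g : ℝ → ℝ)
    (hKeven : ∀ x, KP (-x) = KP x)
    (hKper : Function.Periodic KP (2 * π))
    (hKcont : ContinuousOn KP {x : ℝ | x ≠ 0})
    (hKint : IntegrableOn KP (Set.Icc (-π) π))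
    (hKdec : StrictAntiOn KP (Set.Ioo 0 π))
    (hfm : Measurable f) (hgm : Measurable g)
    (hfbdd : ∃ C : ℝ, ∀ x, |f x| ≤ C) (hgbdd : ∃ C : ℝ, ∀ x, |g x| ≤ C)
    (hfodd : ∀ y, f (-y) = -f y) (hgodd : ∀ y, g (-y) = -g y)
    (hfg : ∀ y ∈ Set.Icc 0 π, g y ≤ f y) :
    (∀ x ∈ Set.Ioo 0 π,
        (∫ y in Set.Icc (-π) π, KP (x - y) * g y)
          < ∫ y in Set.Icc (-π) π, KP (x - y) * f y) ∨
    (∀ᵐ y ∂(volume.restrict (Set.Icc (-π) π)), f y = g y) :=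
  conv_strict_monotone_odd_general KP f g hKeven hKper hKint hKdec hfm hgm hfbdd hgbdd hfodd hgodd
    hfg
end

section
/- Let K_P ∈ W^{1,1}(𝕋) be even, 2π-periodic, positive, smooth on 𝕋∖{0}, with K_P′ < 0 on (0,π). Suppose φ ∈ C²(𝕋) is even, 2π-periodic, with φ′ < 0 on (0,π), φ′(π) = 0, φ(0) < μ, and satisfies (μ−φ)φ″ = Lφ″ + (φ′)² pointwise. Then φ″(0) < 0. -/
open MeasureTheory Real

open Set Filter Topology intervalIntegral in
/-- Strict concavity at the crest: `φ''(0) < 0` for a smooth, even, monotone solution. -/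
theorem second_derivative_neg_at_crest
    (KP φ : ℝ → ℝ) (μ : ℝ)
    (hKeven : ∀ x, KP (-x) = KP x)
    (hKper : Function.Periodic KP (2 * π))
    (hKpos : ∀ x, 0 < KP x)
    (hKint : IntegrableOn KP (Set.Icc (-π) π))
    (hK'int : IntegrableOn (deriv KP) (Set.Icc (-π) π))
    (hKsmooth : ContDiffOn ℝ (⊤ : ℕ∞) KP {x : ℝ | x ≠ 0})
    (hK'neg : ∀ x ∈ Set.Ioo 0 π, deriv KP x < 0)
    (hφC2 : ContDiff ℝ 2 φ)
    (hφeven : ∀ x, φ (-x) = φ x)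
    (hφper : Function.Periodic φ (2 * π))
    (hφ'neg : ∀ x ∈ Set.Ioo 0 π, deriv φ x < 0)
    (hφ'π : deriv φ π = 0)
    (hφ0 : φ 0 < μ)
    (heq : ∀ x, (μ - φ x) * deriv (deriv φ) x
      = (∫ y in Set.Icc (-π) π, KP (x - y) * deriv (deriv φ) y) + (deriv φ x)^2) :
    deriv (deriv φ) 0 < 0 := by
  have hπ : (0:ℝ) < π := pi_pos
  -- regularity of φ
  have hφ1 : ContDiff ℝ 1 (deriv φ) := by
    have : ContDiff ℝ (1 + 1) φ := by exact_mod_cast hφC2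
    exact (contDiff_succ_iff_deriv.mp this).2.2
  have hψdiff : Differentiable ℝ (deriv φ) := hφ1.differentiable one_ne_zero
  have hψcont : Continuous (deriv φ) := hφ1.continuous
  have hψ'cont : Continuous (deriv (deriv φ)) := hφ1.continuous_deriv le_rfl
  -- oddness/evenness
  have hψodd : ∀ x, deriv φ (-x) = - deriv φ x := by
    intro x
    have h1 : deriv (fun y => φ (-y)) x = - deriv φ (-x) := deriv_comp_neg φ x
    simp only [hφeven] at h1
    linarith [h1]
  have hψ0 : deriv φ 0 = 0 := by have := hψodd 0; simp at this; linarith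
  have hψ'even : ∀ x, deriv (deriv φ) (-x) = deriv (deriv φ) x := by
    intro x
    have h1 : deriv (fun y => deriv φ (-y)) x = - deriv (deriv φ) (-x) :=
      deriv_comp_neg (deriv φ) x
    have h2 : (fun y => deriv φ (-y)) = fun y => - deriv φ y := funext hψodd
    rw [h2, deriv.fun_neg] at h1
    linarith
  -- regularity of KP away from 0
  have hopen : IsOpen {x : ℝ | x ≠ 0} := isOpen_ne
  have hKcontOn : ContinuousOn KP {x : ℝ | x ≠ 0} := hKsmooth.continuousOn
  have hKderiv : ∀ x : ℝ, x ≠ 0 → HasDerivAt KP (deriv KP x) x := fun x hx =>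
    ((hKsmooth.differentiableOn (by simp)).differentiableAt
      (hopen.mem_nhds hx)).hasDerivAt
  -- KP is antitone on (0, π]
  have hanti : AntitoneOn KP (Ioc 0 π) := by
    have : StrictAntiOn KP (Ioc 0 π) := by
      apply strictAntiOn_of_deriv_neg (convex_Ioc 0 π)
        (hKcontOn.mono (fun x hx => ne_of_gt hx.1))
      intro x hx
      rw [interior_Ioc] at hx
      exact hK'neg x hx
    exact this.antitoneOn
  -- integrability facts
  have hsub1 : Icc (0:ℝ) π ⊆ Icc (-π) π := Icc_subset_Icc (by linarith) le_rfl
  have hsub2 : Icc (-π) (0:ℝ) ⊆ Icc (-π) π := Icc_subset_Icc le_rfl hπ.le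
  have hKint0 : IntegrableOn KP (Icc 0 π) := hKint.mono_set hsub1
  have hK'int0 : IntegrableOn (deriv KP) (Icc 0 π) := hK'int.mono_set hsub1
  have hg_int : IntegrableOn (fun y => KP y * deriv (deriv φ) y) (Icc 0 π) :=
    hKint0.mul_continuousOn hψ'cont.continuousOn isCompact_Icc
  have hg_int' : IntegrableOn (fun y => KP y * deriv (deriv φ) y) (Icc (-π) 0) :=
    (hKint.mono_set hsub2).mul_continuousOn hψ'cont.continuousOn isCompact_Icc
  have hh_int : IntegrableOn (fun y => deriv KP y * deriv φ y) (Icc 0 π) :=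
    hK'int0.mul_continuousOn hψcont.continuousOn isCompact_Icc
  have hgI : IntervalIntegrable (fun y => KP y * deriv (deriv φ) y) volume 0 π := by
    apply IntegrableOn.intervalIntegrable; rwa [uIcc_of_le hπ.le]
  have hgI' : IntervalIntegrable (fun y => KP y * deriv (deriv φ) y) volume (-π) 0 := by
    apply IntegrableOn.intervalIntegrable; rwa [uIcc_of_le (by linarith : -π ≤ (0:ℝ))]
  have hhI : IntervalIntegrable (fun y => deriv KP y * deriv φ y) volume 0 π := by
    apply IntegrableOn.intervalIntegrable; rwa [uIcc_of_le hπ.le]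
  set A : ℝ := ∫ y in (0:ℝ)..π, KP y * deriv (deriv φ) y with hA
  set B : ℝ := ∫ y in (0:ℝ)..π, deriv KP y * deriv φ y with hB
  -- filter along which we take ε → 0⁺
  set l : Filter ℝ := 𝓝[>] (0:ℝ) with hl
  have hIoo : Ioo (0:ℝ) π ∈ l := Ioo_mem_nhdsGT_of_mem ⟨le_rfl, hπ⟩
  have hle : l ≤ 𝓝[Icc (0:ℝ) π] 0 :=
    (nhdsWithin_le_of_mem hIoo).trans (nhdsWithin_mono _ Ioo_subset_Icc_self)
  -- limits of primitives
  have hprim : ∀ f : ℝ → ℝ, IntegrableOn f (Icc 0 π) →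
      Tendsto (fun ε => ∫ t in (0:ℝ)..ε, f t) l (𝓝 0) := by
    intro f hf
    have hc : ContinuousOn (fun x => ∫ t in (0:ℝ)..x, f t) (Icc 0 π) := by
      have := continuousOn_primitive_interval (μ := volume) (a := (0:ℝ)) (b := π)
        (f := f) (by rwa [uIcc_of_le hπ.le])
      rwa [uIcc_of_le hπ.le] at this
    have h0 := (hc 0 ⟨le_rfl, hπ.le⟩).tendsto
    rw [intervalIntegral.integral_same] at h0
    exact h0.mono_left hle
  -- integration by parts on [ε, π]
  have parts : ∀ ε ∈ Ioo (0:ℝ) π, (∫ y in ε..π, KP y * deriv (deriv φ) y)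
      = - (KP ε * deriv φ ε) - ∫ y in ε..π, deriv KP y * deriv φ y := by
    intro ε hε
    have huIcc : uIcc ε π = Icc ε π := uIcc_of_le hε.2.le
    have hne : ∀ x ∈ uIcc ε π, x ≠ 0 := by
      intro x hx; rw [huIcc] at hx; exact ne_of_gt (lt_of_lt_of_le hε.1 hx.1)
    have h := intervalIntegral.integral_mul_deriv_eq_deriv_mul
      (u := KP) (v := deriv φ) (u' := deriv KP) (v' := deriv (deriv φ))
      (a := ε) (b := π)
      (fun x hx => hKderiv x (hne x hx))
      (fun x _ => (hψdiff x).hasDerivAt)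
      ?_ ?_
    · rw [hφ'π, mul_zero, zero_sub] at h
      linarith [h]
    · apply IntegrableOn.intervalIntegrable
      rw [huIcc]
      exact hK'int0.mono_set (Icc_subset_Icc hε.1.le le_rfl)
    · exact (hψ'cont.intervalIntegrable ε π)
  -- limit of LHS : A
  have hLHS : Tendsto (fun ε => ∫ y in ε..π, KP y * deriv (deriv φ) y) l (𝓝 A) := by
    have heq' : ∀ᶠ ε in l, (∫ y in ε..π, KP y * deriv (deriv φ) y)
        = A - ∫ t in (0:ℝ)..ε, KP t * deriv (deriv φ) t := by
      filter_upwards [hIoo] with ε hε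
      have h1 : IntervalIntegrable (fun y => KP y * deriv (deriv φ) y) volume 0 ε :=
        hgI.mono_set (by
          rw [uIcc_of_le hε.1.le, uIcc_of_le hπ.le]
          exact Icc_subset_Icc le_rfl hε.2.le)
      have h2 : IntervalIntegrable (fun y => KP y * deriv (deriv φ) y) volume ε π :=
        hgI.mono_set (by
          rw [uIcc_of_le hε.2.le, uIcc_of_le hπ.le]
          exact Icc_subset_Icc hε.1.le le_rfl)
      have := intervalIntegral.integral_add_adjacent_intervals h1 h2
      rw [hA]; linarith [this]
    have : Tendsto (fun ε => A - ∫ t in (0:ℝ)..ε, KP t * deriv (deriv φ) t) l (𝓝 (A - 0)) :=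
      tendsto_const_nhds.sub (hprim _ hg_int)
    rw [sub_zero] at this
    exact this.congr' (heq'.mono fun ε h => h.symm)
  -- limit of ∫_ε^π K' φ' : B
  have hRHS2 : Tendsto (fun ε => ∫ y in ε..π, deriv KP y * deriv φ y) l (𝓝 B) := by
    have heq' : ∀ᶠ ε in l, (∫ y in ε..π, deriv KP y * deriv φ y)
        = B - ∫ t in (0:ℝ)..ε, deriv KP t * deriv φ t := by
      filter_upwards [hIoo] with ε hε
      have h1 : IntervalIntegrable (fun y => deriv KP y * deriv φ y) volume 0 ε :=
        hhI.mono_set (by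
          rw [uIcc_of_le hε.1.le, uIcc_of_le hπ.le]
          exact Icc_subset_Icc le_rfl hε.2.le)
      have h2 : IntervalIntegrable (fun y => deriv KP y * deriv φ y) volume ε π :=
        hhI.mono_set (by
          rw [uIcc_of_le hε.2.le, uIcc_of_le hπ.le]
          exact Icc_subset_Icc hε.1.le le_rfl)
      have := intervalIntegral.integral_add_adjacent_intervals h1 h2
      rw [hB]; linarith [this]
    have : Tendsto (fun ε => B - ∫ t in (0:ℝ)..ε, deriv KP t * deriv φ t) l (𝓝 (B - 0)) :=
      tendsto_const_nhds.sub (hprim _ hh_int)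
    rw [sub_zero] at this
    exact this.congr' (heq'.mono fun ε h => h.symm)
  -- boundary term tends to 0
  obtain ⟨M, hM⟩ := isCompact_Icc.exists_bound_of_continuousOn
    (s := Icc (0:ℝ) π) hψ'cont.continuousOn
  have hbdry : Tendsto (fun ε => KP ε * deriv φ ε) l (𝓝 0) := by
    apply squeeze_zero_norm'
      (a := fun ε => M * ∫ t in Ioc (0:ℝ) ε, KP t)
    · filter_upwards [hIoo] with ε hε
      -- |φ' ε| ≤ M * ε
      have hftc : deriv φ ε = ∫ t in (0:ℝ)..ε, deriv (deriv φ) t := by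
        rw [intervalIntegral.integral_deriv_eq_sub
          (fun x _ => (hψdiff x)) (hψ'cont.intervalIntegrable 0 ε), hψ0, sub_zero]
      have hφ'bd : |deriv φ ε| ≤ M * ε := by
        rw [hftc]
        have := intervalIntegral.norm_integral_le_of_norm_le_const
          (C := M) (f := deriv (deriv φ)) (a := 0) (b := ε) ?_
        · simpa [abs_of_pos hε.1] using this
        · intro x hx
          rw [uIoc_of_le hε.1.le] at hx
          exact hM x ⟨hx.1.le, hx.2.trans hε.2.le⟩
      -- ε * KP ε ≤ ∫_{(0,ε]} KP
      have hKmono : ε * KP ε ≤ ∫ t in Ioc (0:ℝ) ε, KP t := by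
        have hconst : ∫ t in Ioc (0:ℝ) ε, KP ε = ε * KP ε := by
          simp [Real.volume_Ioc, hε.1.le]
        rw [← hconst]
        apply setIntegral_mono_on
        · exact (integrableOn_const_iff).mpr (Or.inr (by simp [Real.volume_Ioc]))
        · exact hKint0.mono_set (Ioc_subset_Icc_self.trans
            (Icc_subset_Icc le_rfl hε.2.le))
        · exact measurableSet_Ioc
        · intro t ht
          exact hanti ⟨ht.1, ht.2.trans hε.2.le⟩ ⟨hε.1, hε.2.le⟩ ht.2
      have hM0 : 0 ≤ M := le_trans (abs_nonneg _) (hM 0 ⟨le_rfl, hπ.le⟩)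
      calc ‖KP ε * deriv φ ε‖ = KP ε * |deriv φ ε| := by
            rw [norm_mul, Real.norm_eq_abs, Real.norm_eq_abs,
              abs_of_pos (hKpos ε)]
        _ ≤ KP ε * (M * ε) := by
            apply mul_le_mul_of_nonneg_left hφ'bd (hKpos ε).le
        _ = M * (ε * KP ε) := by ring
        _ ≤ M * ∫ t in Ioc (0:ℝ) ε, KP t := mul_le_mul_of_nonneg_left hKmono hM0
    · have : Tendsto (fun ε => ∫ t in (0:ℝ)..ε, KP t) l (𝓝 0) := hprim _ hKint0
      have h2 : Tendsto (fun ε => M * ∫ t in (0:ℝ)..ε, KP t) l (𝓝 (M * 0)) :=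
        this.const_mul M
      rw [mul_zero] at h2
      apply h2.congr'
      filter_upwards [hIoo] with ε hε
      rw [intervalIntegral.integral_of_le hε.1.le]
  -- conclude A = -B
  have hAB : A = -B := by
    have h1 : Tendsto (fun ε => ∫ y in ε..π, KP y * deriv (deriv φ) y) l (𝓝 (-0 - B)) := by
      have := (hbdry.neg).sub hRHS2
      apply this.congr'
      filter_upwards [hIoo] with ε hε
      exact (parts ε hε).symm
    rw [neg_zero, zero_sub] at h1
    exact tendsto_nhds_unique hLHS h1
  -- B > 0
  have hBpos : 0 < B := by
    apply intervalIntegral_pos_of_pos_on hhI _ hπ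
    intro x hx
    exact mul_pos_of_neg_of_neg (hK'neg x hx) (hφ'neg x hx)
  have hAneg : A < 0 := by rw [hAB]; linarith
  -- now evaluate the equation at 0
  have h0 := heq 0
  rw [hψ0] at h0
  have hfun : (fun y => KP (0 - y) * deriv (deriv φ) y)
      = fun y => KP y * deriv (deriv φ) y := by
    funext y; rw [zero_sub, hKeven]
  rw [hfun] at h0
  -- the set integral equals 2A
  have hsplit : (∫ y in Icc (-π) π, KP y * deriv (deriv φ) y) = 2 * A := by
    rw [MeasureTheory.integral_Icc_eq_integral_Ioc,
      ← intervalIntegral.integral_of_le (by linarith : -π ≤ π),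
      ← intervalIntegral.integral_add_adjacent_intervals hgI' hgI]
    have hleft : (∫ y in (-π)..(0:ℝ), KP y * deriv (deriv φ) y) = A := by
      have := intervalIntegral.integral_comp_neg
        (f := fun y => KP y * deriv (deriv φ) y) (a := (0:ℝ)) (b := π)
      rw [neg_zero] at this
      rw [← this, hA]
      congr 1
      funext y
      rw [hKeven, hψ'even]
    rw [hleft, hA]; ring
  rw [hsplit] at h0
  -- finish
  have hμ : 0 < μ - φ 0 := by linarith
  nlinarith [h0, hAneg, hμ]
end

section
/- Let μ ∈ ℝ, let L be a bounded linear operator on L^∞(𝕋) with ‖Lf(x) − Lf(y)‖ ≤ C‖f‖_∞ |x−y| for all x, y (Lipschitz smoothing), and let φ ∈ L^∞(𝕋) satisfy (1/2)(2μ − φ(x) − φ(y))(φ(x) − φ(y)) = Lφ(x) − Lφ(y) for all x, y, together with φ ≤ μ. Then (1/2)(φ(x) − φ(y))² ≤ C‖φ‖_∞|x−y| for all x, y; in particular, φ is (1/2)-Hölder continuous with |φ(x) − φ(y)| ≤ (2C‖φ‖_∞)^{1/2} |x−y|^{1/2}. -/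
/-!
Since `φ x, φ y ≤ μ`, the factor `2μ - φ x - φ y` dominates `|φ x - φ y|`, so the left side of the
equation bounds `(1/2) (φ x - φ y)^2`, while the Lipschitz smoothing of `L` bounds the right side
by `C M |x - y|`. Taking square roots gives the Hölder bound.
-/

lemma sq_sub_le_abs_mul_of_le {a b μ : ℝ} (ha : a ≤ μ) (hb : b ≤ μ) :
    (a - b) ^ 2 ≤ |(2 * μ - a - b) * (a - b)| := by
  have hdom : |a - b| ≤ |2 * μ - a - b| :=
    (abs_le.2 ⟨by linarith, by linarith⟩).trans (le_abs_self _)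
  rw [← sq_abs, sq, abs_mul]
  exact mul_le_mul_of_nonneg_right hdom (abs_nonneg _)

lemma abs_le_sqrt_mul_sqrt_of_sq_le {d a b : ℝ} (h : d ^ 2 ≤ a * b) (hb : 0 ≤ b) :
    |d| ≤ √a * √b := by
  rw [← Real.sqrt_mul' a hb]
  exact Real.abs_le_sqrt h

/-- Bounded solutions of the steady equation with a Lipschitz-smoothing operator `L`
are `1/2`-Hölder continuous. -/
theorem half_holder_regularity
    (L : (ℝ → ℝ) → (ℝ → ℝ)) (μ C M : ℝ) (φ : ℝ → ℝ)
    (hLip : ∀ f : ℝ → ℝ, ∀ M' : ℝ, (∀ z, |f z| ≤ M') →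
      ∀ x y, |L f x - L f y| ≤ C * M' * |x - y|)
    (hM : ∀ z, |φ z| ≤ M)
    (hφle : ∀ x, φ x ≤ μ)
    (heq : ∀ x y, (1/2) * (2 * μ - φ x - φ y) * (φ x - φ y) = L φ x - L φ y) :
    (∀ x y, (1/2) * (φ x - φ y)^2 ≤ C * M * |x - y|) ∧
    (∀ x y, |φ x - φ y| ≤ Real.sqrt (2 * C * M) * Real.sqrt |x - y|) := by
  have hsq : ∀ x y, (1/2) * (φ x - φ y)^2 ≤ C * M * |x - y| := fun x y =>
    calc (1/2) * (φ x - φ y)^2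
        ≤ (1/2) * |(2 * μ - φ x - φ y) * (φ x - φ y)| := by
          gcongr; exact sq_sub_le_abs_mul_of_le (hφle x) (hφle y)
      _ = |L φ x - L φ y| := by
          rw [← heq, mul_assoc, abs_mul (1/2), abs_of_pos (one_half_pos (α := ℝ))]
      _ ≤ C * M * |x - y| := hLip φ M hM x y
  refine ⟨hsq, fun x y => abs_le_sqrt_mul_sqrt_of_sq_le ?_ (abs_nonneg _)⟩
  linarith [hsq x y]
end
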